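/- arXiv:1904.03015 — 5 statements merged into one kernel-verified Lean document; each statement's English description precedes it below -/
import Mathlib

section
/- Let S and T be finite sets of real numbers, b < c in S, and a < d in T with a ≤ b < c ≤ d. If a many-to-many matching M between S and T contains both pairs (c,a) and (b,d), then M is not of minimum cost: the matching obtained by replacing these two pairs with (b,a) and (c,d) is a many-to-many matching of cost at most that of M, and of strictly smaller cost whenever a < b or c < d. -/
/-- `M` is a many-to-many matching between `S` and `T`. -/
def IsMM (S T : Finset ℝ) (M : Finset (ℝ × ℝ)) : Prop :=
  (∀ p ∈ M, p.1 ∈ S ∧ p.2 ∈ T) ∧ (∀ s ∈ S, ∃ t, (s, t) ∈ M) ∧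
    (∀ t ∈ T, ∃ s, (s, t) ∈ M)

/-- The cost of a matching. -/
noncomputable def mmCost (M : Finset (ℝ × ℝ)) : ℝ := ∑ p ∈ M, |p.1 - p.2|

lemma mmCost_insert_le (p : ℝ × ℝ) (s : Finset (ℝ × ℝ)) :
    mmCost (insert p s) ≤ |p.1 - p.2| + mmCost s := by
  by_cases h : p ∈ s
  · rw [Finset.insert_eq_self.2 h]
    have : (0:ℝ) ≤ |p.1 - p.2| := abs_nonneg _
    linarith
  · rw [mmCost, Finset.sum_insert h]; rfl

/-- If an MM `M` contains the crossing pairs `(c,a)` and `(b,d)` with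
`a ≤ b < c ≤ d`, then replacing them by `(b,a)` and `(c,d)` yields an MM of cost
at most that of `M`, strictly smaller whenever `a < b` or `c < d`. -/
theorem crossing_pairs_suboptimal (S T : Finset ℝ) (M : Finset (ℝ × ℝ))
    (a b c d : ℝ) (hbS : b ∈ S) (hcS : c ∈ S) (haT : a ∈ T) (hdT : d ∈ T)
    (hbc : b < c) (had : a < d) (hab : a ≤ b) (hcd : c ≤ d)
    (hM : IsMM S T M) (hca : (c, a) ∈ M) (hbd : (b, d) ∈ M) :
    IsMM S T (insert (b, a) (insert (c, d) ((M.erase (c, a)).erase (b, d)))) ∧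
      mmCost (insert (b, a) (insert (c, d) ((M.erase (c, a)).erase (b, d)))) ≤ mmCost M ∧
      ((a < b ∨ c < d) →
        mmCost (insert (b, a) (insert (c, d) ((M.erase (c, a)).erase (b, d)))) < mmCost M) := by
  set E := (M.erase (c, a)).erase (b, d) with hE
  set M' := insert (b, a) (insert (c, d) E) with hM'
  obtain ⟨h1, h2, h3⟩ := hM
  have hne : (b, d) ≠ (c, a) := by
    intro h; exact absurd (congrArg Prod.fst h) (ne_of_lt hbc)
  -- decomposition of cost of M
  have hbd' : (b, d) ∈ M.erase (c, a) := Finset.mem_erase.2 ⟨hne, hbd⟩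
  have hMdecomp : mmCost M = |c - a| + (|b - d| + mmCost E) := by
    rw [mmCost, ← Finset.add_sum_erase _ _ hca, ← Finset.add_sum_erase _ _ hbd']; rfl
  -- key strict inequality on the swapped pairs
  have hkey : |b - a| + |c - d| < |c - a| + |b - d| := by
    rw [abs_of_nonneg (by linarith), abs_of_nonpos (by linarith),
      abs_of_nonneg (by linarith), abs_of_nonpos (by linarith)]
    linarith
  have hcost : mmCost M' < mmCost M := by
    calc mmCost M' ≤ |b - a| + mmCost (insert (c, d) E) := mmCost_insert_le _ _
      _ ≤ |b - a| + (|c - d| + mmCost E) := by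
          have := mmCost_insert_le (c, d) E; linarith
      _ < |c - a| + (|b - d| + mmCost E) := by linarith
      _ = mmCost M := hMdecomp.symm
  refine ⟨⟨?_, ?_, ?_⟩, le_of_lt hcost, fun _ => hcost⟩
  · intro p hp
    rcases Finset.mem_insert.1 hp with rfl | hp
    · exact ⟨hbS, haT⟩
    rcases Finset.mem_insert.1 hp with rfl | hp
    · exact ⟨hcS, hdT⟩
    · exact h1 p (Finset.mem_of_mem_erase (Finset.mem_of_mem_erase hp))
  · intro s hs
    obtain ⟨t, ht⟩ := h2 s hs
    by_cases h1' : (s, t) = (c, a)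
    · refine ⟨d, ?_⟩
      have : s = c := congrArg Prod.fst h1'
      subst this
      exact Finset.mem_insert.2 (Or.inr (Finset.mem_insert_self _ _))
    by_cases h2' : (s, t) = (b, d)
    · refine ⟨a, ?_⟩
      have : s = b := congrArg Prod.fst h2'
      subst this
      exact Finset.mem_insert_self _ _
    · exact ⟨t, Finset.mem_insert.2 (Or.inr (Finset.mem_insert.2 (Or.inr
        (Finset.mem_erase.2 ⟨h2', Finset.mem_erase.2 ⟨h1', ht⟩⟩))))⟩
  · intro t ht
    obtain ⟨s, hst⟩ := h3 t ht
    by_cases h1' : (s, t) = (c, a)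
    · refine ⟨b, ?_⟩
      have : t = a := congrArg Prod.snd h1'
      subst this
      exact Finset.mem_insert_self _ _
    by_cases h2' : (s, t) = (b, d)
    · refine ⟨c, ?_⟩
      have : t = d := congrArg Prod.snd h2'
      subst this
      exact Finset.mem_insert.2 (Or.inr (Finset.mem_insert_self _ _))
    · exact ⟨s, Finset.mem_insert.2 (Or.inr (Finset.mem_insert.2 (Or.inr
        (Finset.mem_erase.2 ⟨h2', Finset.mem_erase.2 ⟨h1', hst⟩⟩))))⟩
end

section
/- Let a < b < c < d be real numbers with a, c ∈ S and b, d ∈ T. Then |a-b| + |c-d| < |a-d|. Consequently, if a many-to-many matching M between S and T contains the pair (a,d), then replacing (a,d) by the two pairs (a,b) and (c,d) yields a many-to-many matching of strictly smaller cost; hence no minimum-cost many-to-many matching contains the pair (a,d). -/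
lemma sum_insert_le_aux (x : ℝ × ℝ) (s : Finset (ℝ × ℝ)) (f : ℝ × ℝ → ℝ)
    (hf : ∀ p, 0 ≤ f p) : ∑ p ∈ insert x s, f p ≤ f x + ∑ p ∈ s, f p := by
  by_cases h : x ∈ s
  · rw [Finset.insert_eq_self.2 h]
    have := hf x; linarith
  · rw [Finset.sum_insert h]

/-- For `a < b < c < d` with `a, c ∈ S` and `b, d ∈ T`, we have
`|a-b| + |c-d| < |a-d|`; consequently replacing the pair `(a,d)` of an MM `M` by
`(a,b)` and `(c,d)` gives an MM of strictly smaller cost, so no minimum-cost MM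
contains `(a,d)`. -/
theorem long_pair_suboptimal (S T : Finset ℝ) (a b c d : ℝ)
    (haS : a ∈ S) (hcS : c ∈ S) (hbT : b ∈ T) (hdT : d ∈ T)
    (hab : a < b) (hbc : b < c) (hcd : c < d) :
    |a - b| + |c - d| < |a - d| ∧
      ∀ M : Finset (ℝ × ℝ), IsMM S T M → (a, d) ∈ M →
        (IsMM S T (insert (a, b) (insert (c, d) (M.erase (a, d)))) ∧
          mmCost (insert (a, b) (insert (c, d) (M.erase (a, d)))) < mmCost M ∧
          ¬ (∀ M' : Finset (ℝ × ℝ), IsMM S T M' → mmCost M ≤ mmCost M')) := by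
  have hineq : |a - b| + |c - d| < |a - d| := by
    rw [abs_of_nonpos (by linarith), abs_of_nonpos (by linarith),
      abs_of_nonpos (by linarith)]
    linarith
  refine ⟨hineq, fun M hM had => ?_⟩
  obtain ⟨h1, h2, h3⟩ := hM
  have hMM : IsMM S T (insert (a, b) (insert (c, d) (M.erase (a, d)))) := by
    refine ⟨?_, ?_, ?_⟩
    · intro p hp
      simp only [Finset.mem_insert, Finset.mem_erase] at hp
      rcases hp with rfl | rfl | ⟨_, hp⟩
      · exact ⟨haS, hbT⟩
      · exact ⟨hcS, hdT⟩
      · exact h1 p hp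
    · intro s hs
      obtain ⟨t, ht⟩ := h2 s hs
      by_cases h : (s, t) = (a, d)
      · obtain ⟨rfl, rfl⟩ := Prod.mk.injEq .. ▸ h
        exact ⟨b, by simp⟩
      · exact ⟨t, by simp [ht, h]⟩
    · intro t ht
      obtain ⟨s, hs⟩ := h3 t ht
      by_cases h : (s, t) = (a, d)
      · obtain ⟨rfl, rfl⟩ := Prod.mk.injEq .. ▸ h
        exact ⟨c, by simp⟩
      · exact ⟨s, by simp [hs, h]⟩
  have hsplit : mmCost M = |a - d| + mmCost (M.erase (a, d)) := by
    exact (Finset.add_sum_erase _ (fun p => |p.1 - p.2|) had).symm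
  have hle : mmCost (insert (a, b) (insert (c, d) (M.erase (a, d)))) ≤
      |a - b| + (|c - d| + mmCost (M.erase (a, d))) := by
    unfold mmCost
    refine le_trans (sum_insert_le_aux _ _ _ (fun p => abs_nonneg _)) ?_
    gcongr
    exact sum_insert_le_aux _ _ _ (fun p => abs_nonneg _)
  have hlt : mmCost (insert (a, b) (insert (c, d) (M.erase (a, d)))) < mmCost M := by
    rw [hsplit]; linarith
  refine ⟨hMM, hlt, fun hopt => ?_⟩
  have := hopt _ hMM
  linarith
end

section
/- Let M be a minimum-cost many-to-many matching between S and T, and let p be a point matched with more than one point, say p is matched with distinct points q₁, …, q_k (k ≥ 2). Then removing from M all pairs containing p except the pair joining p to the point among q₁, …, q_k closest to p still yields a valid many-to-many matching provided each qⱼ is matched to some other point as well; consequently, in a minimum-cost matching, if deg(p) > 1 then each extra pair (p, qⱼ) must be necessary for covering qⱼ, i.e. every point q ≠ argmin distance matched to p is matched only to p. -/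
/-- `x` and `y` are matched in `M` (in either orientation). -/
def Matched (M : Finset (ℝ × ℝ)) (x y : ℝ) : Prop := (x, y) ∈ M ∨ (y, x) ∈ M

lemma cost_nonneg (M : Finset (ℝ × ℝ)) : 0 ≤ mmCost M :=
  Finset.sum_nonneg fun _ _ => abs_nonneg _

lemma cost_insert_le (a : ℝ × ℝ) (s : Finset (ℝ × ℝ)) :
    mmCost (insert a s) ≤ |a.1 - a.2| + mmCost s := by
  by_cases h : a ∈ s
  · rw [Finset.insert_eq_self.2 h]
    have := abs_nonneg (a.1 - a.2); linarith
  · rw [mmCost, Finset.sum_insert h]; rfl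

lemma isMM_patch (S T : Finset ℝ) (M : Finset (ℝ × ℝ)) (hM : IsMM S T M)
    (p q : ℝ) (M' : Finset (ℝ × ℝ))
    (hsub : M.erase (p, q) ⊆ M') (hval : ∀ e ∈ M', e.1 ∈ S ∧ e.2 ∈ T)
    (hp : ∃ t, (p, t) ∈ M') (hq : ∃ s, (s, q) ∈ M') : IsMM S T M' := by
  refine ⟨hval, ?_, ?_⟩
  · intro s hs
    obtain ⟨t, ht⟩ := hM.2.1 s hs
    by_cases h : (s, t) = (p, q)
    · have : s = p := congrArg Prod.fst h
      rw [this]; exact hp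
    · exact ⟨t, hsub (Finset.mem_erase.2 ⟨h, ht⟩)⟩
  · intro t ht
    obtain ⟨s, hs⟩ := hM.2.2 t ht
    by_cases h : (s, t) = (p, q)
    · have : t = q := congrArg Prod.snd h
      rw [this]; exact hq
    · exact ⟨s, hsub (Finset.mem_erase.2 ⟨h, hs⟩)⟩

/-- Core lemma: in a minimum-cost MM, if `(p,q) ∈ M` with `p ≠ q`, `p` has another
partner `q₀ ≠ q`, and `q` has a partner `r ≠ p`, we get a contradiction. -/
lemma core (S T : Finset ℝ) (M : Finset (ℝ × ℝ)) (hM : IsMM S T M)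
    (hmin : ∀ M' : Finset (ℝ × ℝ), IsMM S T M' → mmCost M ≤ mmCost M')
    (p q : ℝ) (hpq : (p, q) ∈ M) (hne : p ≠ q)
    (q₀ : ℝ) (hq₀ : Matched M p q₀) (hq₀q : q₀ ≠ q)
    (r : ℝ) (hr : Matched M q r) (hrp : r ≠ p) : False := by
  obtain ⟨hmem, hS, hT⟩ := hM
  have hpS : p ∈ S := (hmem _ hpq).1
  have hqT : q ∈ T := (hmem _ hpq).2
  have hpos : 0 < |p - q| := abs_pos.2 (sub_ne_zero.2 hne)
  set base := M.erase (p, q) with hbase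
  have hbase_cost : mmCost base = mmCost M - |p - q| := by
    simpa [mmCost] using
      Finset.sum_erase_eq_sub (f := fun e : ℝ × ℝ => |e.1 - e.2|) hpq
  have hbase_sub : base ⊆ M := Finset.erase_subset _ _
  have finish : ∀ M' : Finset (ℝ × ℝ), IsMM S T M' → mmCost M' < mmCost M → False :=
    fun M' h1 h2 => absurd (hmin M' h1) (not_le.2 h2)
  -- the pair covering p in the new matching
  rcases hq₀ with hq₀ | hq₀ <;> rcases hr with hr | hr
  · -- (p,q₀) ∈ M, (q,r) ∈ M : patch q with (q,q); q ∈ S from (q,r) ∈ M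
    have hqS : q ∈ S := (hmem _ hr).1
    refine finish (insert (q, q) base) ?_ ?_
    · refine isMM_patch S T M ⟨hmem, hS, hT⟩ p q _ (Finset.subset_insert _ _) ?_ ?_ ?_
      · intro e he
        rcases Finset.mem_insert.1 he with h | h
        · rw [h]; exact ⟨hqS, hqT⟩
        · exact hmem _ (hbase_sub h)
      · exact ⟨q₀, Finset.mem_insert_of_mem (Finset.mem_erase.2
          ⟨fun h => hq₀q (congrArg Prod.snd h), hq₀⟩)⟩
      · exact ⟨q, Finset.mem_insert_self _ _⟩
    · have := cost_insert_le (q, q) base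
      simp only [sub_self, abs_zero, zero_add] at this
      linarith
  · -- (p,q₀) ∈ M, (r,q) ∈ M : just erase
    refine finish base ?_ ?_
    · refine isMM_patch S T M ⟨hmem, hS, hT⟩ p q _ (le_refl base) ?_ ?_ ?_
      · intro e he; exact hmem _ (hbase_sub he)
      · exact ⟨q₀, Finset.mem_erase.2 ⟨fun h => hq₀q (congrArg Prod.snd h), hq₀⟩⟩
      · exact ⟨r, Finset.mem_erase.2 ⟨fun h => hrp (congrArg Prod.fst h), hr⟩⟩
    · linarith
  · -- (q₀,p) ∈ M, (q,r) ∈ M : patch with (p,p) and (q,q)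
    have hpT : p ∈ T := (hmem _ hq₀).2
    have hqS : q ∈ S := (hmem _ hr).1
    refine finish (insert (p, p) (insert (q, q) base)) ?_ ?_
    · refine isMM_patch S T M ⟨hmem, hS, hT⟩ p q _
        ((Finset.subset_insert _ _).trans (Finset.subset_insert _ _)) ?_ ?_ ?_
      · intro e he
        rcases Finset.mem_insert.1 he with h | h
        · rw [h]; exact ⟨hpS, hpT⟩
        rcases Finset.mem_insert.1 h with h | h
        · rw [h]; exact ⟨hqS, hqT⟩
        · exact hmem _ (hbase_sub h)
      · exact ⟨p, Finset.mem_insert_self _ _⟩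
      · exact ⟨q, Finset.mem_insert_of_mem (Finset.mem_insert_self _ _)⟩
    · have h1 := cost_insert_le (p, p) (insert (q, q) base)
      have h2 := cost_insert_le (q, q) base
      simp only [sub_self, abs_zero, zero_add] at h1 h2
      linarith
  · -- (q₀,p) ∈ M, (r,q) ∈ M : patch with (p,p)
    have hpT : p ∈ T := (hmem _ hq₀).2
    refine finish (insert (p, p) base) ?_ ?_
    · refine isMM_patch S T M ⟨hmem, hS, hT⟩ p q _ (Finset.subset_insert _ _) ?_ ?_ ?_
      · intro e he
        rcases Finset.mem_insert.1 he with h | h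
        · rw [h]; exact ⟨hpS, hpT⟩
        · exact hmem _ (hbase_sub h)
      · exact ⟨p, Finset.mem_insert_self _ _⟩
      · exact ⟨r, Finset.mem_insert_of_mem (Finset.mem_erase.2
          ⟨fun h => hrp (congrArg Prod.fst h), hr⟩)⟩
    · have := cost_insert_le (p, p) base
      simp only [sub_self, abs_zero, zero_add] at this
      linarith

/-- Swapping a matching. -/
noncomputable def swapM (M : Finset (ℝ × ℝ)) : Finset (ℝ × ℝ) :=
  M.map (Equiv.prodComm ℝ ℝ).toEmbedding

lemma mem_swapM {M : Finset (ℝ × ℝ)} {a b : ℝ} : (a, b) ∈ swapM M ↔ (b, a) ∈ M := by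
  simp [swapM, Finset.mem_map_equiv]

lemma isMM_swapM {S T : Finset ℝ} {M : Finset (ℝ × ℝ)} (h : IsMM S T M) :
    IsMM T S (swapM M) := by
  obtain ⟨hmem, hS, hT⟩ := h
  refine ⟨?_, ?_, ?_⟩
  · rintro ⟨a, b⟩ hab
    have := hmem _ (mem_swapM.1 hab)
    exact ⟨this.2, this.1⟩
  · intro t ht; obtain ⟨s, hs⟩ := hT t ht; exact ⟨s, mem_swapM.2 hs⟩
  · intro s hs; obtain ⟨t, ht⟩ := hS s hs; exact ⟨t, mem_swapM.2 ht⟩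

lemma cost_swapM (M : Finset (ℝ × ℝ)) : mmCost (swapM M) = mmCost M := by
  rw [swapM, mmCost, Finset.sum_map]
  exact Finset.sum_congr rfl fun x _ => abs_sub_comm _ _

/-- In a minimum-cost MM, if `p` has degree greater than one, then (i) if every
partner of `p` other than a closest one is matched elsewhere, removing all pairs
at `p` except the one to the closest partner still yields an MM, and (ii) every
partner of `p` other than a closest partner is matched only to `p`. -/
theorem degree_gt_one_partners (S T : Finset ℝ) (M : Finset (ℝ × ℝ))
    (hM : IsMM S T M) (hmin : ∀ M' : Finset (ℝ × ℝ), IsMM S T M' → mmCost M ≤ mmCost M')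
    (p : ℝ) (hp : p ∈ S ∪ T)
    (q₁ q₂ : ℝ) (hq₁ : Matched M p q₁) (hq₂ : Matched M p q₂) (hne : q₁ ≠ q₂)
    (q₀ : ℝ) (hq₀ : Matched M p q₀) (hclosest : ∀ q, Matched M p q → |p - q₀| ≤ |p - q|) :
    ((∀ q, Matched M p q → q ≠ q₀ → ∃ r, r ≠ p ∧ Matched M q r) →
        IsMM S T (M.filter fun e => (e.1 = p ∨ e.2 = p) → (e = (p, q₀) ∨ e = (q₀, p)))) ∧
      (∀ q, Matched M p q → q ≠ q₀ → ∀ r, Matched M q r → r = p) := by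
  have h2 : ∀ q, Matched M p q → q ≠ q₀ → ∀ r, Matched M q r → r = p := by
    intro q hq hqne r hr
    by_contra hrp
    have hpq : p ≠ q := by
      intro h
      have h1 := hclosest q hq
      rw [← h, sub_self, abs_zero] at h1
      have : p = q₀ := by
        have := abs_nonneg (p - q₀)
        have h2 : |p - q₀| = 0 := le_antisymm h1 this
        have := abs_eq_zero.1 h2
        linarith [sub_eq_zero.1 this]
      exact hqne (h ▸ this.symm ▸ rfl)
    rcases hq with hq | hq
    · exact core S T M hM hmin p q hq hpq q₀ hq₀ (Ne.symm hqne) r hr hrp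
    · -- (q,p) ∈ M : work in the swapped world
      have hM' : IsMM T S (swapM M) := isMM_swapM hM
      have hmin' : ∀ M' : Finset (ℝ × ℝ), IsMM T S M' → mmCost (swapM M) ≤ mmCost M' := by
        intro M' hMM'
        rw [cost_swapM]
        calc mmCost M ≤ mmCost (swapM M') := hmin _ (isMM_swapM hMM')
          _ = mmCost M' := cost_swapM M'
      have hq' : (p, q) ∈ swapM M := mem_swapM.2 hq
      have hq₀' : Matched (swapM M) p q₀ := by
        rcases hq₀ with h | h
        · exact Or.inr (mem_swapM.2 h)
        · exact Or.inl (mem_swapM.2 h)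
      have hr' : Matched (swapM M) q r := by
        rcases hr with h | h
        · exact Or.inr (mem_swapM.2 h)
        · exact Or.inl (mem_swapM.2 h)
      exact core T S (swapM M) hM' hmin' p q hq' hpq q₀ hq₀' (Ne.symm hqne) r hr' hrp
  refine ⟨?_, h2⟩
  intro h
  exfalso
  by_cases hq₁₀ : q₁ = q₀
  · have hq₂₀ : q₂ ≠ q₀ := fun h' => hne (hq₁₀.trans h'.symm)
    obtain ⟨r, hrp, hqr⟩ := h q₂ hq₂ hq₂₀
    exact hrp (h2 q₂ hq₂ hq₂₀ r hqr)
  · obtain ⟨r, hrp, hqr⟩ := h q₁ hq₁ hq₁₀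
    exact hrp (h2 q₁ hq₁ hq₁₀ r hqr)
end

section
/- Case 0 formula, sub-case i > s: with a₁ < … < a_s < b₁ < … < b_t and i with s < i ≤ t, the matching that pairs a_j with b_j for j = 1, …, s and pairs b_{s+1}, …, b_i all with a_s is a many-to-many matching between {a₁,…,a_s} and {b₁,…,b_i} whose cost equals (i - s)·e_s + Σ_{j=1}^{s} e_j + Σ_{j=1}^{i} f_j, where e_j = b₁ - a_j and f_j = b_j - b₁. -/
/-- Case 0, sub-case `i > s`: the matching pairing `a_j` with `b_j` for
`j = 1, …, s` and `a_s` with `b_{s+1}, …, b_i` is an MM between `{a₁,…,a_s}`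
and `{b₁,…,b_i}` of cost `(i-s)·e_s + Σ_{j=1}^s e_j + Σ_{j=1}^i f_j`. -/
theorem case0_large_i (s t i : ℕ) (hs : 1 ≤ s) (hsi : s < i) (hit : i ≤ t)
    (a b : ℕ → ℝ)
    (ha : ∀ j k, 1 ≤ j → j < k → k ≤ s → a j < a k)
    (hb : ∀ j k, 1 ≤ j → j < k → k ≤ t → b j < b k)
    (hab : a s < b 1)
    (e : ℕ → ℝ) (he : ∀ j, e j = b 1 - a j)
    (f : ℕ → ℝ) (hf : ∀ j, f j = b j - b 1) :
    IsMM ((Finset.Icc 1 s).image a) ((Finset.Icc 1 i).image b)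
        (((Finset.Icc 1 s).image fun j => (a j, b j)) ∪
          ((Finset.Icc (s + 1) i).image fun j => (a s, b j))) ∧
      mmCost (((Finset.Icc 1 s).image fun j => (a j, b j)) ∪
          ((Finset.Icc (s + 1) i).image fun j => (a s, b j))) =
        (i - s : ℝ) * e s + (∑ j ∈ Finset.Icc 1 s, e j) + ∑ j ∈ Finset.Icc 1 i, f j := by
  have hbm : ∀ j k, 1 ≤ j → j ≤ k → k ≤ t → b j ≤ b k := by
    intro j k h1 hjk hkt
    rcases eq_or_lt_of_le hjk with h | h
    · rw [h]
    · exact (hb j k h1 h hkt).le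
  have ham : ∀ j, 1 ≤ j → j ≤ s → a j ≤ a s := by
    intro j h1 hjs
    rcases eq_or_lt_of_le hjs with h | h
    · rw [h]
    · exact (ha j s h1 h le_rfl).le
  have hbi : ∀ j, 1 ≤ j → j ≤ i → b 1 ≤ b j := fun j h1 h2 => hbm 1 j le_rfl h1 (h2.trans hit)
  have hdisj : Disjoint ((Finset.Icc 1 s).image fun j => (a j, b j))
      ((Finset.Icc (s + 1) i).image fun j => (a s, b j)) := by
    rw [Finset.disjoint_left]
    rintro p hp hq
    simp only [Finset.mem_image, Finset.mem_Icc] at hp hq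
    obtain ⟨j, ⟨hj1, hjs⟩, rfl⟩ := hp
    obtain ⟨k, ⟨hk1, hki⟩, hk⟩ := hq
    have : b j < b k := hb j k hj1 (lt_of_le_of_lt hjs (Nat.lt_of_succ_le hk1)) (hki.trans hit)
    have h2 := congrArg Prod.snd hk
    simp at h2
    linarith
  constructor
  · refine ⟨?_, ?_, ?_⟩
    · intro p hp
      rcases Finset.mem_union.1 hp with h | h <;>
        simp only [Finset.mem_image, Finset.mem_Icc] at h <;>
        obtain ⟨j, ⟨hj1, hj2⟩, rfl⟩ := h <;>
        simp only [Finset.mem_image, Finset.mem_Icc]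
      · exact ⟨⟨j, ⟨hj1, hj2⟩, rfl⟩, ⟨j, ⟨hj1, hj2.trans hsi.le⟩, rfl⟩⟩
      · exact ⟨⟨s, ⟨hs, le_rfl⟩, rfl⟩, ⟨j, ⟨le_trans (Nat.le_succ s) hj1 |>.trans' hs, hj2⟩, rfl⟩⟩
    · intro x hx
      simp only [Finset.mem_image, Finset.mem_Icc] at hx
      obtain ⟨j, hj, rfl⟩ := hx
      exact ⟨b j, Finset.mem_union_left _ (Finset.mem_image.2 ⟨j, Finset.mem_Icc.2 hj, rfl⟩)⟩
    · intro y hy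
      simp only [Finset.mem_image, Finset.mem_Icc] at hy
      obtain ⟨j, ⟨hj1, hji⟩, rfl⟩ := hy
      by_cases hjs : j ≤ s
      · exact ⟨a j, Finset.mem_union_left _
          (Finset.mem_image.2 ⟨j, Finset.mem_Icc.2 ⟨hj1, hjs⟩, rfl⟩)⟩
      · exact ⟨a s, Finset.mem_union_right _
          (Finset.mem_image.2 ⟨j, Finset.mem_Icc.2 ⟨Nat.succ_le_of_lt (not_le.1 hjs), hji⟩, rfl⟩)⟩
  · rw [mmCost, Finset.sum_union hdisj]
    have hinj1 : ∀ x ∈ Finset.Icc 1 s, ∀ y ∈ Finset.Icc 1 s,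
        (fun j => (a j, b j)) x = (fun j => (a j, b j)) y → x = y := by
      intro x hx y hy hxy
      simp only [Finset.mem_Icc] at hx hy
      simp only [Prod.mk.injEq] at hxy
      by_contra hne
      rcases lt_or_gt_of_ne hne with h | h
      · exact absurd hxy.2 (hb x y hx.1 h (hy.2.trans (hsi.le.trans hit))).ne
      · exact absurd hxy.2 (hb y x hy.1 h (hx.2.trans (hsi.le.trans hit))).ne.symm
    have hinj2 : ∀ x ∈ Finset.Icc (s+1) i, ∀ y ∈ Finset.Icc (s+1) i,
        (fun j => ((a s : ℝ), b j)) x = (fun j => ((a s : ℝ), b j)) y → x = y := by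
      intro x hx y hy hxy
      simp only [Finset.mem_Icc] at hx hy
      simp only [Prod.mk.injEq] at hxy
      by_contra hne
      rcases lt_or_gt_of_ne hne with h | h
      · exact absurd hxy.2 (hb x y (hs.trans (hx.1.trans' (Nat.le_succ s))) h (hy.2.trans hit)).ne
      · exact absurd hxy.2 (hb y x (hs.trans (hy.1.trans' (Nat.le_succ s))) h (hx.2.trans hit)).ne.symm
    rw [Finset.sum_image hinj1, Finset.sum_image hinj2]
    have h1 : ∑ j ∈ Finset.Icc 1 s, |a j - b j| = ∑ j ∈ Finset.Icc 1 s, (e j + f j) := by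
      apply Finset.sum_congr rfl
      intro j hj
      simp only [Finset.mem_Icc] at hj
      have h1 : a j ≤ a s := ham j hj.1 hj.2
      have h2 : b 1 ≤ b j := hbi j hj.1 (hj.2.trans hsi.le)
      rw [abs_sub_comm, abs_of_nonneg (by linarith), he, hf]
      ring
    have h2 : ∑ j ∈ Finset.Icc (s+1) i, |a s - b j| =
        ∑ j ∈ Finset.Icc (s+1) i, (e s + f j) := by
      apply Finset.sum_congr rfl
      intro j hj
      simp only [Finset.mem_Icc] at hj
      have h2 : b 1 ≤ b j := hbi j (hs.trans (hj.1.trans' (Nat.le_succ s))) hj.2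
      rw [abs_sub_comm, abs_of_nonneg (by linarith), he, hf]
      ring
    rw [h1, h2, Finset.sum_add_distrib, Finset.sum_add_distrib, Finset.sum_const]
    have hcard : (Finset.Icc (s+1) i).card = i - s := by
      rw [Nat.card_Icc]; omega
    have hsplit : ∑ j ∈ Finset.Icc 1 i, f j =
        ∑ j ∈ Finset.Icc 1 s, f j + ∑ j ∈ Finset.Icc (s+1) i, f j := by
      rw [show Finset.Icc 1 i = Finset.Icc 1 s ∪ Finset.Icc (s+1) i by
            ext x; simp only [Finset.mem_Icc, Finset.mem_union]; omega,
        Finset.sum_union (by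
          rw [Finset.disjoint_left]; intro x hx hy
          simp only [Finset.mem_Icc] at hx hy; omega)]
    rw [hcard, hsplit]
    have : ((i - s : ℕ) : ℝ) = (i : ℝ) - s := by
      rw [Nat.cast_sub hsi.le]
    rw [nsmul_eq_mul, this]
    ring
end

section
/- In a minimum-cost limited-capacity many-to-many matching (OLCMM) M between S and T, there do not exist points a ≤ b < c ≤ d with a, d in one set and b, c in the other set such that both (a,c) ∈ M and (b,d) ∈ M, provided a < b or c < d; this is because exchanging these two pairs for (a,b) and (c,d) yields another matching respecting the same capacities with strictly smaller cost. -/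
/-- `M` is a limited-capacity many-to-many matching between `S` and `T` with
capacity function `Cap`: pairs come from `S × T`, every point is covered, and
each point `p` appears in at most `Cap p` pairs. -/
def IsLCMM (S T : Finset ℝ) (Cap : ℝ → ℕ) (M : Finset (ℝ × ℝ)) : Prop :=
  (∀ p ∈ M, p.1 ∈ S ∧ p.2 ∈ T) ∧ (∀ s ∈ S, ∃ t, (s, t) ∈ M) ∧
    (∀ t ∈ T, ∃ s, (s, t) ∈ M) ∧
    (∀ p : ℝ, (M.filter fun e => e.1 = p ∨ e.2 = p).card ≤ Cap p)

private lemma sum_insert_le_abs (a : ℝ × ℝ) (s : Finset (ℝ × ℝ)) :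
    ∑ p ∈ insert a s, |p.1 - p.2| ≤ |a.1 - a.2| + ∑ p ∈ s, |p.1 - p.2| := by
  by_cases h : a ∈ s
  · rw [Finset.insert_eq_self.2 h]
    have : (0:ℝ) ≤ |a.1 - a.2| := abs_nonneg _
    linarith
  · rw [Finset.sum_insert h]

private lemma card_le_of_subset_insert_erase {A B : Finset (ℝ × ℝ)} {a b : ℝ × ℝ}
    (h : A ⊆ insert a (B.erase b)) (hb : b ∈ B) : A.card ≤ B.card := by
  have h1 : A.card ≤ (B.erase b).card + 1 :=
    le_trans (Finset.card_le_card h) (Finset.card_insert_le _ _)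
  have h2 : (B.erase b).card = B.card - 1 := Finset.card_erase_of_mem hb
  have h3 : 0 < B.card := Finset.card_pos.2 ⟨b, hb⟩
  omega

/-- If `(x,y) ∈ M` with `x ∈ T`, `y ∈ S` and `x ≠ y`, we can replace it by the
zero-cost pairs `(x,x)` and `(y,y)` to get a strictly cheaper LCMM. -/
private lemma deg_lemma (S T : Finset ℝ) (Cap : ℝ → ℕ) (M : Finset (ℝ × ℝ))
    (hM : IsLCMM S T Cap M) {x y : ℝ} (hxy : (x, y) ∈ M) (hxT : x ∈ T)
    (hyS : y ∈ S) (hne : x ≠ y) :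
    ∃ M', IsLCMM S T Cap M' ∧ mmCost M' < mmCost M := by
  obtain ⟨hmem, hScov, hTcov, hcap⟩ := hM
  classical
  set E := M.erase (x, y) with hE
  refine ⟨insert (x, x) (insert (y, y) E), ⟨?_, ?_, ?_, ?_⟩, ?_⟩
  · -- pairs come from S × T
    intro e he
    simp only [Finset.mem_insert, hE, Finset.mem_erase] at he
    rcases he with rfl | rfl | ⟨_, heM⟩
    · exact ⟨(hmem _ hxy).1, hxT⟩
    · exact ⟨hyS, (hmem _ hxy).2⟩
    · exact hmem _ heM
  · -- S-coverage
    intro s hs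
    obtain ⟨t, ht⟩ := hScov s hs
    by_cases h : (s, t) = (x, y)
    · refine ⟨x, ?_⟩
      have hsx : s = x := (Prod.ext_iff.1 h).1
      subst hsx
      simp
    · refine ⟨t, ?_⟩
      simp only [Finset.mem_insert, hE, Finset.mem_erase]
      exact Or.inr (Or.inr ⟨h, ht⟩)
  · -- T-coverage
    intro t ht
    obtain ⟨s, hs⟩ := hTcov t ht
    by_cases h : (s, t) = (x, y)
    · refine ⟨y, ?_⟩
      have hty : t = y := (Prod.ext_iff.1 h).2
      subst hty
      simp
    · refine ⟨s, ?_⟩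
      simp only [Finset.mem_insert, hE, Finset.mem_erase]
      exact Or.inr (Or.inr ⟨h, hs⟩)
  · -- capacities
    intro z
    by_cases hzx : z = x
    · subst hzx
      have hsub : (insert (z, z) (insert (y, y) E)).filter
          (fun e => e.1 = z ∨ e.2 = z) ⊆
          insert (z, z) ((M.filter (fun e => e.1 = z ∨ e.2 = z)).erase (z, y)) := by
        intro e he
        simp only [Finset.mem_filter, Finset.mem_insert, hE, Finset.mem_erase] at he ⊢
        obtain ⟨h1, h2⟩ := he
        rcases h1 with rfl | rfl | ⟨hne', hmem'⟩
        · exact Or.inl rfl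
        · exfalso; rcases h2 with h2 | h2 <;> exact hne h2.symm
        · exact Or.inr ⟨hne', hmem', h2⟩
      have hb : (z, y) ∈ M.filter (fun e : ℝ × ℝ => e.1 = z ∨ e.2 = z) :=
        Finset.mem_filter.2 ⟨hxy, Or.inl rfl⟩
      exact le_trans (card_le_of_subset_insert_erase hsub hb) (hcap z)
    · by_cases hzy : z = y
      · subst hzy
        have hsub : (insert (x, x) (insert (z, z) E)).filter
            (fun e => e.1 = z ∨ e.2 = z) ⊆
            insert (z, z) ((M.filter (fun e => e.1 = z ∨ e.2 = z)).erase (x, z)) := by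
          intro e he
          simp only [Finset.mem_filter, Finset.mem_insert, hE, Finset.mem_erase] at he ⊢
          obtain ⟨h1, h2⟩ := he
          rcases h1 with rfl | rfl | ⟨hne', hmem'⟩
          · exfalso; rcases h2 with h2 | h2 <;> exact hne h2
          · exact Or.inl rfl
          · exact Or.inr ⟨hne', hmem', h2⟩
        have hb : (x, z) ∈ M.filter (fun e : ℝ × ℝ => e.1 = z ∨ e.2 = z) :=
          Finset.mem_filter.2 ⟨hxy, Or.inr rfl⟩
        exact le_trans (card_le_of_subset_insert_erase hsub hb) (hcap z)
      · have hsub : (insert (x, x) (insert (y, y) E)).filter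
            (fun e => e.1 = z ∨ e.2 = z) ⊆
            M.filter (fun e => e.1 = z ∨ e.2 = z) := by
          intro e he
          simp only [Finset.mem_filter, Finset.mem_insert, hE, Finset.mem_erase] at he ⊢
          obtain ⟨h1, h2⟩ := he
          rcases h1 with rfl | rfl | ⟨hne', hmem'⟩
          · exfalso; rcases h2 with h2 | h2 <;> exact hzx h2.symm
          · exfalso; rcases h2 with h2 | h2 <;> exact hzy h2.symm
          · exact ⟨hmem', h2⟩
        exact le_trans (Finset.card_le_card hsub) (hcap z)
  · -- cost
    have hEsum : ∑ p ∈ E, |p.1 - p.2| + |x - y| = ∑ p ∈ M, |p.1 - p.2| :=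
      Finset.sum_erase_add M _ hxy
    have h1 : mmCost (insert (x, x) (insert (y, y) E)) ≤
        |x - x| + (|y - y| + ∑ p ∈ E, |p.1 - p.2|) := by
      unfold mmCost
      exact le_trans (sum_insert_le_abs _ _)
        (by have := sum_insert_le_abs ((y : ℝ), (y : ℝ)) E; simpa using by linarith)
    have hpos : 0 < |x - y| := abs_pos.2 (sub_ne_zero.2 hne)
    unfold mmCost at *
    simp only [sub_self, abs_zero] at h1
    linarith

/-- Uncrossing exchange: replace `(p,q)` and `(r,s)` by `(p,s)` and `(r,q)`. -/
private lemma uncross_lemma (S T : Finset ℝ) (Cap : ℝ → ℕ) (M : Finset (ℝ × ℝ))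
    (hM : IsLCMM S T Cap M) {p q r s : ℝ}
    (h1 : (p, q) ∈ M) (h2 : (r, s) ∈ M)
    (hpq : p ≠ q) (hpr : p ≠ r) (hsq : s ≠ q) (hsr : s ≠ r)
    (hcost : |p - s| + |r - q| < |p - q| + |r - s|) :
    ∃ M', IsLCMM S T Cap M' ∧ mmCost M' < mmCost M := by
  obtain ⟨hmem, hScov, hTcov, hcap⟩ := hM
  classical
  have hne12 : ((r, s) : ℝ × ℝ) ≠ (p, q) := by
    intro h; exact hpr (Prod.ext_iff.1 h).1.symm
  have h2' : (r, s) ∈ M.erase (p, q) := Finset.mem_erase.2 ⟨hne12, h2⟩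
  set E := (M.erase (p, q)).erase (r, s) with hE
  refine ⟨insert (p, s) (insert (r, q) E), ⟨?_, ?_, ?_, ?_⟩, ?_⟩
  · intro e he
    simp only [Finset.mem_insert, hE, Finset.mem_erase] at he
    rcases he with rfl | rfl | ⟨_, _, heM⟩
    · exact ⟨(hmem _ h1).1, (hmem _ h2).2⟩
    · exact ⟨(hmem _ h2).1, (hmem _ h1).2⟩
    · exact hmem _ heM
  · -- S-coverage
    intro s0 hs0
    obtain ⟨t0, ht0⟩ := hScov s0 hs0
    by_cases hA : (s0, t0) = (p, q)
    · have : s0 = p := (Prod.ext_iff.1 hA).1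
      subst this
      exact ⟨s, by simp⟩
    · by_cases hB : (s0, t0) = (r, s)
      · have : s0 = r := (Prod.ext_iff.1 hB).1
        subst this
        exact ⟨q, by simp⟩
      · refine ⟨t0, ?_⟩
        simp only [Finset.mem_insert, hE, Finset.mem_erase]
        exact Or.inr (Or.inr ⟨hB, hA, ht0⟩)
  · -- T-coverage
    intro t0 ht0
    obtain ⟨s0, hs0⟩ := hTcov t0 ht0
    by_cases hA : (s0, t0) = (p, q)
    · have : t0 = q := (Prod.ext_iff.1 hA).2
      subst this
      exact ⟨r, by simp⟩
    · by_cases hB : (s0, t0) = (r, s)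
      · have : t0 = s := (Prod.ext_iff.1 hB).2
        subst this
        exact ⟨p, by simp⟩
      · refine ⟨s0, ?_⟩
        simp only [Finset.mem_insert, hE, Finset.mem_erase]
        exact Or.inr (Or.inr ⟨hB, hA, hs0⟩)
  · -- capacities
    intro z
    have hbpq : (p, q) ∈ M.filter (fun e : ℝ × ℝ => e.1 = z ∨ e.2 = z) →
        (M.filter (fun e : ℝ × ℝ => e.1 = z ∨ e.2 = z)) = _ := fun _ => rfl
    by_cases hzp : z = p
    · subst hzp
      have hb : (z, q) ∈ M.filter (fun e : ℝ × ℝ => e.1 = z ∨ e.2 = z) :=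
        Finset.mem_filter.2 ⟨h1, Or.inl rfl⟩
      have hsub : (insert (z, s) (insert (r, q) E)).filter
          (fun e => e.1 = z ∨ e.2 = z) ⊆
          insert (z, s) ((M.filter (fun e => e.1 = z ∨ e.2 = z)).erase (z, q)) := by
        intro e he
        simp only [Finset.mem_filter, Finset.mem_insert, hE, Finset.mem_erase] at he ⊢
        obtain ⟨hmem', hP⟩ := he
        rcases hmem' with rfl | rfl | ⟨hne1, hne2, heM⟩
        · exact Or.inl rfl
        · exfalso; rcases hP with h | h
          · exact hpr h.symm
          · exact hpq h.symm
        · exact Or.inr ⟨hne2, heM, hP⟩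
      exact le_trans (card_le_of_subset_insert_erase hsub hb) (hcap z)
    · by_cases hzs : z = s
      · subst hzs
        have hb : (r, z) ∈ M.filter (fun e : ℝ × ℝ => e.1 = z ∨ e.2 = z) :=
          Finset.mem_filter.2 ⟨h2, Or.inr rfl⟩
        have hsub : (insert (p, z) (insert (r, q) E)).filter
            (fun e => e.1 = z ∨ e.2 = z) ⊆
            insert (p, z) ((M.filter (fun e => e.1 = z ∨ e.2 = z)).erase (r, z)) := by
          intro e he
          simp only [Finset.mem_filter, Finset.mem_insert, hE, Finset.mem_erase] at he ⊢
          obtain ⟨hmem', hP⟩ := he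
          rcases hmem' with rfl | rfl | ⟨hne1, hne2, heM⟩
          · exact Or.inl rfl
          · exfalso; rcases hP with h | h
            · exact hsr h.symm
            · exact hsq h.symm
          · exact Or.inr ⟨hne1, heM, hP⟩
        exact le_trans (card_le_of_subset_insert_erase hsub hb) (hcap z)
      · by_cases hzq : z = q
        · subst hzq
          have hb : (p, z) ∈ M.filter (fun e : ℝ × ℝ => e.1 = z ∨ e.2 = z) :=
            Finset.mem_filter.2 ⟨h1, Or.inr rfl⟩
          have hsub : (insert (p, s) (insert (r, z) E)).filter
              (fun e => e.1 = z ∨ e.2 = z) ⊆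
              insert (r, z) ((M.filter (fun e => e.1 = z ∨ e.2 = z)).erase (p, z)) := by
            intro e he
            simp only [Finset.mem_filter, Finset.mem_insert, hE, Finset.mem_erase] at he ⊢
            obtain ⟨hmem', hP⟩ := he
            rcases hmem' with rfl | rfl | ⟨hne1, hne2, heM⟩
            · exfalso; rcases hP with h | h
              · exact hpq h
              · exact hsq h
            · exact Or.inl rfl
            · exact Or.inr ⟨hne2, heM, hP⟩
          exact le_trans (card_le_of_subset_insert_erase hsub hb) (hcap z)
        · by_cases hzr : z = r
          · subst hzr
            have hb : (z, s) ∈ M.filter (fun e : ℝ × ℝ => e.1 = z ∨ e.2 = z) :=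
              Finset.mem_filter.2 ⟨h2, Or.inl rfl⟩
            have hsub : (insert (p, s) (insert (z, q) E)).filter
                (fun e => e.1 = z ∨ e.2 = z) ⊆
                insert (z, q) ((M.filter (fun e => e.1 = z ∨ e.2 = z)).erase (z, s)) := by
              intro e he
              simp only [Finset.mem_filter, Finset.mem_insert, hE, Finset.mem_erase] at he ⊢
              obtain ⟨hmem', hP⟩ := he
              rcases hmem' with rfl | rfl | ⟨hne1, hne2, heM⟩
              · exfalso; rcases hP with h | h
                · exact hpr h
                · exact hsr h
              · exact Or.inl rfl
              · exact Or.inr ⟨hne1, heM, hP⟩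
            exact le_trans (card_le_of_subset_insert_erase hsub hb) (hcap z)
          · have hsub : (insert (p, s) (insert (r, q) E)).filter
                (fun e => e.1 = z ∨ e.2 = z) ⊆
                M.filter (fun e => e.1 = z ∨ e.2 = z) := by
              intro e he
              simp only [Finset.mem_filter, Finset.mem_insert, hE, Finset.mem_erase] at he ⊢
              obtain ⟨hmem', hP⟩ := he
              rcases hmem' with rfl | rfl | ⟨hne1, hne2, heM⟩
              · exfalso; rcases hP with h | h
                · exact hzp h.symm
                · exact hzs h.symm
              · exfalso; rcases hP with h | h
                · exact hzr h.symm
                · exact hzq h.symm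
              · exact ⟨heM, hP⟩
            exact le_trans (Finset.card_le_card hsub) (hcap z)
  · -- cost
    have hsum1 : ∑ e ∈ M.erase (p, q), |e.1 - e.2| + |p - q| = ∑ e ∈ M, |e.1 - e.2| :=
      Finset.sum_erase_add M _ h1
    have hsum2 : ∑ e ∈ E, |e.1 - e.2| + |r - s| = ∑ e ∈ M.erase (p, q), |e.1 - e.2| :=
      Finset.sum_erase_add _ _ h2'
    have hle : mmCost (insert (p, s) (insert (r, q) E)) ≤
        |p - s| + (|r - q| + ∑ e ∈ E, |e.1 - e.2|) := by
      unfold mmCost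
      refine le_trans (sum_insert_le_abs _ _) ?_
      have := sum_insert_le_abs ((r : ℝ), (q : ℝ)) E
      simp only at this ⊢
      linarith
    unfold mmCost at hle ⊢
    linarith

/-- In a minimum-cost limited-capacity many-to-many matching `M`, there are no
crossing pairs: no `a ≤ b < c ≤ d` with `a, d` in one set and `b, c` in the
other, `(a,c)` and `(b,d)` matched in `M`, and `a < b` or `c < d`. -/
theorem lcmm_no_crossing (S T : Finset ℝ) (Cap : ℝ → ℕ)
    (hCap : ∀ p ∈ S ∪ T, 0 < Cap p) (M : Finset (ℝ × ℝ))
    (hM : IsLCMM S T Cap M)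
    (hmin : ∀ M' : Finset (ℝ × ℝ), IsLCMM S T Cap M' → mmCost M ≤ mmCost M') :
    ¬ ∃ a b c d : ℝ, a ≤ b ∧ b < c ∧ c ≤ d ∧ (a < b ∨ c < d) ∧
      ((a ∈ S ∧ d ∈ S ∧ b ∈ T ∧ c ∈ T) ∨ (a ∈ T ∧ d ∈ T ∧ b ∈ S ∧ c ∈ S)) ∧
      Matched M a c ∧ Matched M b d := by
  rintro ⟨a, b, c, d, hab, hbc, hcd, _hor, hcase, hac, hbd⟩
  have hac' : a < c := lt_of_le_of_lt hab hbc
  have hbd' : b < d := lt_of_lt_of_le hbc hcd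
  have had : a < d := lt_of_lt_of_le hac' hcd
  rcases hcase with ⟨haS, hdS, hbT, hcT⟩ | ⟨haT, hdT, hbS, hcS⟩
  · -- a, d ∈ S; b, c ∈ T
    rcases hac with h1 | h1
    · rcases hbd with h2 | h2
      · -- (a,c) ∈ M, (b,d) ∈ M : degenerate on (b,d)
        obtain ⟨M', hM', hlt⟩ := deg_lemma S T Cap M hM h2 hbT hdS hbd'.ne
        exact absurd (hmin M' hM') (not_le.2 hlt)
      · -- (a,c) ∈ M, (d,b) ∈ M : uncross
        have hcost : |a - b| + |d - c| < |a - c| + |d - b| := by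
          rw [abs_of_nonpos (by linarith : a - b ≤ 0),
            abs_of_nonneg (by linarith : (0:ℝ) ≤ d - c),
            abs_of_nonpos (by linarith : a - c ≤ 0),
            abs_of_nonneg (by linarith : (0:ℝ) ≤ d - b)]
          linarith
        obtain ⟨M', hM', hlt⟩ := uncross_lemma S T Cap M hM h1 h2
          hac'.ne had.ne hbc.ne hbd'.ne hcost
        exact absurd (hmin M' hM') (not_le.2 hlt)
    · -- (c,a) ∈ M : degenerate on (c,a)
      obtain ⟨M', hM', hlt⟩ := deg_lemma S T Cap M hM h1 hcT haS hac'.ne'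
      exact absurd (hmin M' hM') (not_le.2 hlt)
  · -- a, d ∈ T; b, c ∈ S
    rcases hac with h1 | h1
    · -- (a,c) ∈ M : degenerate on (a,c)
      obtain ⟨M', hM', hlt⟩ := deg_lemma S T Cap M hM h1 haT hcS hac'.ne
      exact absurd (hmin M' hM') (not_le.2 hlt)
    · rcases hbd with h2 | h2
      · -- (c,a) ∈ M, (b,d) ∈ M : uncross with p=b,q=d,r=c,s=a
        have hcost : |b - a| + |c - d| < |b - d| + |c - a| := by
          rw [abs_of_nonneg (by linarith : (0:ℝ) ≤ b - a),
            abs_of_nonpos (by linarith : c - d ≤ 0),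
            abs_of_nonpos (by linarith : b - d ≤ 0),
            abs_of_nonneg (by linarith : (0:ℝ) ≤ c - a)]
          linarith
        obtain ⟨M', hM', hlt⟩ := uncross_lemma S T Cap M hM h2 h1
          hbd'.ne hbc.ne had.ne hac'.ne hcost
        exact absurd (hmin M' hM') (not_le.2 hlt)
      · -- (d,b) ∈ M : degenerate on (d,b)
        obtain ⟨M', hM', hlt⟩ := deg_lemma S T Cap M hM h2 hdT hbS hbd'.ne'
        exact absurd (hmin M' hM') (not_le.2 hlt)
end
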